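/- Let M be a rank-1 projective measurement assemblage in dimension d ≥ 1 with m settings (so o = d outcomes) whose measurements are mutually unbiased to the computational (incoherent) basis, i.e., (M x a) i i = 1/d for all i, a, x (diagonal entries all equal to 1/d). Then for any weighting p the coherence equals C⋄(M,p) = 1 − 1/d. -/

import Mathlib

open Matrix Kronecker BigOperators ComplexOrder

noncomputable section

def IsDensityMatrix {n : Type*} [Fintype n] [DecidableEq n] (ρ : Matrix n n ℂ) : Prop :=
  ρ.PosSemidef ∧ ρ.trace = 1

noncomputable def traceNorm {n : Type*} [Fintype n] [DecidableEq n] (X : Matrix n n ℂ) : ℝ :=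
  (((Matrix.posSemidef_conjTranspose_mul_self X).1.eigenvectorUnitary : Matrix n n ℂ) *
    Matrix.diagonal (((↑) : ℝ → ℂ) ∘ (Real.sqrt ∘ (Matrix.posSemidef_conjTranspose_mul_self X).1.eigenvalues)) *
    (star (Matrix.posSemidef_conjTranspose_mul_self X).1.eigenvectorUnitary : Matrix n n ℂ)).trace.re

noncomputable def specNorm {n : Type*} [Fintype n] [DecidableEq n] (X : Matrix n n ℂ) : ℝ :=
  ‖Matrix.toEuclideanCLM (𝕜 := ℂ) X‖

def ptrace1 {n e : Type*} [Fintype n] (ρ : Matrix (n × e) (n × e) ℂ) : Matrix e e ℂ :=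
  Matrix.of fun j j' => ∑ i, ρ (i, j) (i, j')

def IsAssemblage {d m o : ℕ} (M : Fin m → Fin o → Matrix (Fin d) (Fin d) ℂ) : Prop :=
  (∀ x a, (M x a).PosSemidef) ∧ ∀ x, ∑ a, M x a = 1

def IsWeighting {m : ℕ} (p : Fin m → ℝ) : Prop :=
  (∀ x, 0 < p x) ∧ ∑ x, p x = 1

noncomputable def Ddiamond {d m o : ℕ} (p : Fin m → ℝ)
    (M N : Fin m → Fin o → Matrix (Fin d) (Fin d) ℂ) : ℝ :=
  (1 / 2) * ∑ x, p x *
    ⨆ ρ : {ρ : Matrix (Fin d × Fin d) (Fin d × Fin d) ℂ // IsDensityMatrix ρ},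
      ∑ a, traceNorm (ptrace1 (((M x a - N x a) ⊗ₖ (1 : Matrix (Fin d) (Fin d) ℂ)) * ρ.1))

def JointlyMeasurable {d m o : ℕ} (F : Fin m → Fin o → Matrix (Fin d) (Fin d) ℂ) : Prop :=
  ∃ G : (Fin m → Fin o) → Matrix (Fin d) (Fin d) ℂ,
    (∀ lam, (G lam).PosSemidef) ∧ (∑ lam, G lam = 1) ∧
    ∀ x a, F x a = ∑ lam ∈ Finset.univ.filter (fun lam => lam x = a), G lam

noncomputable def Incomp {d m o : ℕ} (p : Fin m → ℝ)
    (M : Fin m → Fin o → Matrix (Fin d) (Fin d) ℂ) : ℝ :=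
  ⨅ F : {F : Fin m → Fin o → Matrix (Fin d) (Fin d) ℂ // IsAssemblage F ∧ JointlyMeasurable F},
    Ddiamond p M F.1


def IsRankOneProjective {d m : ℕ} (M : Fin m → Fin d → Matrix (Fin d) (Fin d) ℂ) : Prop :=
  ∀ x a, (M x a).IsHermitian ∧ M x a * M x a = M x a ∧ (M x a).trace = 1

def IsIncoherent {d m o : ℕ} (F : Fin m → Fin o → Matrix (Fin d) (Fin d) ℂ) : Prop :=
  ∀ x a, (F x a).IsDiag

noncomputable def Coherence {d m o : ℕ} (p : Fin m → ℝ)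
    (M : Fin m → Fin o → Matrix (Fin d) (Fin d) ℂ) : ℝ :=
  ⨅ F : {F : Fin m → Fin o → Matrix (Fin d) (Fin d) ℂ // IsAssemblage F ∧ IsIncoherent F},
    Ddiamond p M F.1

/-!
The uniform assemblage `F x a = 1/d` is incoherent, and it is at distance at most `1 - 1/d`:
`M x a - 1/d` is the difference of the positive operators `(1 - 1/d) M x a` and
`(1/d) (1 - M x a)`, whose traces (after pairing with any state) sum over `a` to `2 (1 - 1/d)`,
and the trace norm of a difference of positive operators is at most the sum of their traces.

Conversely, let `F` be incoherent. Since `F x a` is diagonal and the diagonal of `M x a` is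
constant `1/d`, `∑ a, Tr (F x a * M x a) = Tr (∑ a, F x a) / d = 1`, so some outcome `a₀` has
`Tr (F x a₀ * M x a₀) ≤ 1/d`. On the product state `M x a₀ ⊗ M x a₀` the `a`-th term of the
diamond distance is `|c a|` with `c a = Tr ((M x a - F x a) M x a₀)`; these numbers sum to `0`
and `c a₀ = 1 - Tr (F x a₀ * M x a₀) ≥ 1 - 1/d` because `M x a₀` is a rank-one projection,
hence `∑ a, |c a| ≥ 2 c a₀ ≥ 2 (1 - 1/d)`.
-/

section TraceNorm

variable {n : Type*} [Fintype n] [DecidableEq n]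

open scoped MatrixOrder

lemma traceNorm_eq_trace_sqrt (X : Matrix n n ℂ) :
    traceNorm X = (CFC.sqrt (Xᴴ * X)).trace.re := by
  unfold traceNorm
  rw [CFC.sqrt_eq_real_sqrt _ (posSemidef_conjTranspose_mul_self X).nonneg, cfcₙ_eq_cfc,
    (posSemidef_conjTranspose_mul_self X).1.cfc_eq, IsHermitian.cfc,
    Unitary.conjStarAlgAut_apply]
  rfl

lemma traceNorm_eq_of_mul_self {X S : Matrix n n ℂ} (hS : S.PosSemidef) (h : S * S = Xᴴ * X) :
    traceNorm X = S.trace.re := by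
  rw [traceNorm_eq_trace_sqrt, CFC.sqrt_unique h hS.nonneg]

lemma Matrix.PosSemidef.traceNorm_smul {X : Matrix n n ℂ} (hX : X.PosSemidef) (z : ℂ) :
    traceNorm (z • X) = ‖z‖ * X.trace.re := by
  have hS : ((‖z‖ : ℂ) • X).PosSemidef := hX.smul (Complex.zero_le_real.2 (norm_nonneg z))
  rw [traceNorm_eq_of_mul_self hS, trace_smul, smul_eq_mul, Complex.re_ofReal_mul]
  rw [conjTranspose_smul, hX.1.eq, smul_mul_smul_comm, smul_mul_smul_comm, ← Complex.ofReal_mul,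
    ← sq, Complex.star_def, Complex.conj_mul', Complex.ofReal_pow]

lemma Matrix.IsHermitian.trace_cfc {𝕜 : Type*} [RCLike 𝕜] {A : Matrix n n 𝕜}
    (hA : A.IsHermitian) (f : ℝ → ℝ) : (cfc f A).trace = ∑ i, (f (hA.eigenvalues i) : 𝕜) := by
  rw [hA.cfc_eq, IsHermitian.cfc, Unitary.conjStarAlgAut_apply, trace_mul_cycle,
    Unitary.coe_star_mul_self, one_mul, trace_diagonal]
  rfl

lemma Matrix.IsHermitian.traceNorm_eq_sum_abs_eigenvalues {Y : Matrix n n ℂ}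
    (hY : Y.IsHermitian) : traceNorm Y = ∑ i, |hY.eigenvalues i| := by
  have hS : (cfc (fun x : ℝ => |x|) Y).PosSemidef :=
    nonneg_iff_posSemidef.mp (cfc_nonneg fun x _ => abs_nonneg x)
  have hsq : cfc (fun x : ℝ => |x|) Y * cfc (fun x : ℝ => |x|) Y = Yᴴ * Y := by
    rw [← cfc_mul .., funext fun x : ℝ => abs_mul_abs_self x, cfc_mul (fun x : ℝ => x) _ Y,
      cfc_id' ℝ Y, hY.eq]
  rw [traceNorm_eq_of_mul_self hS hsq, hY.trace_cfc, Complex.re_sum]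
  simp

lemma Matrix.PosSemidef.traceNorm_sub_le {A B : Matrix n n ℂ} (hA : A.PosSemidef)
    (hB : B.PosSemidef) : traceNorm (A - B) ≤ A.trace.re + B.trace.re := by
  have hY : (A - B).IsHermitian := hA.1.sub hB.1
  set U : Matrix n n ℂ := (hY.eigenvectorUnitary : Matrix n n ℂ)
  have hdiag := hY.conjStarAlgAut_star_eigenvectorUnitary
  rw [Unitary.conjStarAlgAut_star_apply, Matrix.mul_sub, Matrix.sub_mul] at hdiag
  have hA' : (star U * A * U).PosSemidef := by
    simpa [star_eq_conjTranspose] using hA.conjTranspose_mul_mul_same U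
  have hB' : (star U * B * U).PosSemidef := by
    simpa [star_eq_conjTranspose] using hB.conjTranspose_mul_mul_same U
  have hU : U * star U = 1 := Unitary.coe_mul_star_self _
  have htrace : ∀ X : Matrix n n ℂ, (star U * X * U).trace = X.trace := fun X => by
    rw [trace_mul_cycle, hU, one_mul]
  rw [hY.traceNorm_eq_sum_abs_eigenvalues, ← htrace A, ← htrace B, trace, trace, Complex.re_sum,
    Complex.re_sum, ← Finset.sum_add_distrib]
  refine Finset.sum_le_sum fun i _ => ?_
  have hi := congrArg Complex.re (congrFun (congrFun hdiag i) i)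
  simp only [sub_apply, diagonal_apply_eq, Function.comp_apply, Complex.sub_re] at hi
  have h0 := hA'.diag_nonneg (i := i)
  have h1 := hB'.diag_nonneg (i := i)
  rw [Complex.nonneg_iff] at h0 h1
  rw [show hY.eigenvalues i = (RCLike.ofReal (hY.eigenvalues i) : ℂ).re by simp, ← hi,
    diag_apply, diag_apply]
  exact (abs_sub _ _).trans (by rw [abs_of_nonneg h0.1, abs_of_nonneg h1.1])

end TraceNorm

lemma IsDensityMatrix.kronecker {n e : Type*} [Fintype n] [DecidableEq n] [Fintype e]
    [DecidableEq e] {ρ : Matrix n n ℂ} {σ : Matrix e e ℂ} (hρ : IsDensityMatrix ρ)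
    (hσ : IsDensityMatrix σ) : IsDensityMatrix (ρ ⊗ₖ σ) :=
  ⟨hρ.1.kronecker hσ.1, by rw [trace_kronecker, hρ.2, hσ.2, one_mul]⟩

lemma Matrix.sub_kronecker {α l m p q : Type*} [NonUnitalNonAssocRing α] (A B : Matrix l m α)
    (C : Matrix p q α) :
    (A - B) ⊗ₖ C = A ⊗ₖ C - B ⊗ₖ C := by
  ext
  simp [sub_mul]

lemma Matrix.sum_kronecker {α ι l m p q : Type*} [NonUnitalNonAssocSemiring α] (s : Finset ι)
    (A : ι → Matrix l m α) (C : Matrix p q α) : (∑ i ∈ s, A i) ⊗ₖ C = ∑ i ∈ s, A i ⊗ₖ C := by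
  ext
  simp [Matrix.sum_apply, Finset.sum_mul]

section PartialTrace

variable {n e : Type*} [Fintype n]

lemma ptrace1_sub (ρ σ : Matrix (n × e) (n × e) ℂ) :
    ptrace1 (ρ - σ) = ptrace1 ρ - ptrace1 σ := by
  ext j j'
  simp [ptrace1, Finset.sum_sub_distrib]

lemma ptrace1_kronecker (X : Matrix n n ℂ) (σ : Matrix e e ℂ) :
    ptrace1 (X ⊗ₖ σ) = X.trace • σ := by
  ext j j'
  simp [ptrace1, trace, Finset.sum_mul]

lemma ptrace1_eq_sum_submatrix (ρ : Matrix (n × e) (n × e) ℂ) :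
    ptrace1 ρ = ∑ i, ρ.submatrix (Prod.mk i) (Prod.mk i) := by
  ext j j'
  simp [ptrace1, Matrix.sum_apply]

lemma posSemidef_ptrace1 {ρ : Matrix (n × e) (n × e) ℂ} (hρ : ρ.PosSemidef) :
    (ptrace1 ρ).PosSemidef := by
  rw [ptrace1_eq_sum_submatrix]
  exact posSemidef_sum _ fun i _ => hρ.submatrix _

variable [Fintype e]

lemma trace_ptrace1 (ρ : Matrix (n × e) (n × e) ℂ) : (ptrace1 ρ).trace = ρ.trace := by
  simp only [trace, diag, ptrace1, of_apply, Fintype.sum_prod_type]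
  exact Finset.sum_comm

variable [DecidableEq e]

lemma ptrace1_kronecker_one_mul_comm (A : Matrix n n ℂ) (σ : Matrix (n × e) (n × e) ℂ) :
    ptrace1 ((A ⊗ₖ (1 : Matrix e e ℂ)) * σ) = ptrace1 (σ * (A ⊗ₖ (1 : Matrix e e ℂ))) := by
  ext j j'
  simp only [ptrace1, of_apply, mul_apply, kroneckerMap_apply, one_apply, Fintype.sum_prod_type,
    mul_ite, mul_zero, mul_one, ite_mul, zero_mul, Finset.sum_ite_eq, Finset.sum_ite_eq',
    Finset.mem_univ, if_true]
  rw [Finset.sum_comm]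
  exact Finset.sum_congr rfl fun i _ => Finset.sum_congr rfl fun k _ => mul_comm _ _

lemma ptrace1_kronecker_one_mul_kronecker (C P : Matrix n n ℂ) (σ : Matrix e e ℂ) :
    ptrace1 ((C ⊗ₖ (1 : Matrix e e ℂ)) * (P ⊗ₖ σ)) = (C * P).trace • σ := by
  rw [← mul_kronecker_mul, one_mul, ptrace1_kronecker]

lemma traceNorm_ptrace1_kronecker_one_mul_kronecker (C P : Matrix n n ℂ) {σ : Matrix e e ℂ}
    (hσ : IsDensityMatrix σ) :
    traceNorm (ptrace1 ((C ⊗ₖ (1 : Matrix e e ℂ)) * (P ⊗ₖ σ))) = ‖(C * P).trace‖ := by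
  rw [ptrace1_kronecker_one_mul_kronecker, hσ.1.traceNorm_smul, hσ.2, Complex.one_re, mul_one]

open scoped MatrixOrder in
lemma posSemidef_ptrace1_kronecker_one_mul {A : Matrix n n ℂ} (hA : A.PosSemidef)
    {ρ : Matrix (n × e) (n × e) ℂ} (hρ : ρ.PosSemidef) :
    (ptrace1 ((A ⊗ₖ (1 : Matrix e e ℂ)) * ρ)).PosSemidef := by
  classical
  obtain ⟨S, rfl⟩ := CStarAlgebra.nonneg_iff_eq_star_mul_self.mp hA.nonneg
  have hsplit : (star S * S) ⊗ₖ (1 : Matrix e e ℂ) * ρ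
      = (Sᴴ ⊗ₖ (1 : Matrix e e ℂ)) * ((S ⊗ₖ (1 : Matrix e e ℂ)) * ρ) := by
    rw [← mul_assoc, ← mul_kronecker_mul, one_mul, star_eq_conjTranspose]
  have hconj : Sᴴ ⊗ₖ (1 : Matrix e e ℂ) = (S ⊗ₖ (1 : Matrix e e ℂ))ᴴ := by
    rw [conjTranspose_kronecker, conjTranspose_one]
  rw [hsplit, ptrace1_kronecker_one_mul_comm, hconj]
  exact posSemidef_ptrace1 (hρ.mul_mul_conjTranspose_same _)

lemma traceNorm_ptrace1_sub_le {A B : Matrix n n ℂ} (hA : A.PosSemidef) (hB : B.PosSemidef)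
    {ρ : Matrix (n × e) (n × e) ℂ} (hρ : ρ.PosSemidef) :
    traceNorm (ptrace1 (((A - B) ⊗ₖ (1 : Matrix e e ℂ)) * ρ))
      ≤ ((A ⊗ₖ (1 : Matrix e e ℂ)) * ρ).trace.re + ((B ⊗ₖ (1 : Matrix e e ℂ)) * ρ).trace.re := by
  rw [sub_kronecker, sub_mul, ptrace1_sub, ← trace_ptrace1, ← trace_ptrace1]
  exact (posSemidef_ptrace1_kronecker_one_mul hA hρ).traceNorm_sub_le
    (posSemidef_ptrace1_kronecker_one_mul hB hρ)

lemma sum_traceNorm_ptrace1_sub_le [DecidableEq n] {ι : Type*} [Fintype ι]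
    {A B : ι → Matrix n n ℂ} (hA : ∀ i, (A i).PosSemidef) (hB : ∀ i, (B i).PosSemidef) {c : ℝ}
    (hAB : ∑ i, (A i + B i) = (c : ℂ) • 1) {ρ : Matrix (n × e) (n × e) ℂ}
    (hρ : IsDensityMatrix ρ) :
    ∑ i, traceNorm (ptrace1 (((A i - B i) ⊗ₖ (1 : Matrix e e ℂ)) * ρ)) ≤ c := by
  calc ∑ i, traceNorm (ptrace1 (((A i - B i) ⊗ₖ (1 : Matrix e e ℂ)) * ρ))
      ≤ ∑ i, (((A i ⊗ₖ (1 : Matrix e e ℂ)) * ρ).trace.re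
          + ((B i ⊗ₖ (1 : Matrix e e ℂ)) * ρ).trace.re) :=
        Finset.sum_le_sum fun i _ => traceNorm_ptrace1_sub_le (hA i) (hB i) hρ.1
    _ = (((∑ i, (A i + B i)) ⊗ₖ (1 : Matrix e e ℂ)) * ρ).trace.re := by
        simp only [sum_kronecker, add_kronecker, Finset.sum_mul, add_mul, trace_sum, trace_add,
          Complex.re_sum, Complex.add_re]
    _ = c := by
        rw [hAB, smul_kronecker, one_kronecker_one, smul_mul, one_mul, trace_smul, hρ.2]
        simp

end PartialTrace

lemma two_mul_re_le_sum_norm {ι : Type*} [Fintype ι] [DecidableEq ι] {c : ι → ℂ}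
    (hc : ∑ j, c j = 0) (i : ι) : 2 * (c i).re ≤ ∑ j, ‖c j‖ := by
  have hrest : ∑ j ∈ Finset.univ.erase i, c j = -c i := by
    rw [Finset.sum_erase_eq_sub (Finset.mem_univ i), hc, zero_sub]
  calc 2 * (c i).re ≤ ‖c i‖ + ‖∑ j ∈ Finset.univ.erase i, c j‖ := by
        rw [hrest, norm_neg]
        linarith [Complex.re_le_norm (c i)]
    _ ≤ ‖c i‖ + ∑ j ∈ Finset.univ.erase i, ‖c j‖ := by gcongr; exact norm_sum_le _ _
    _ = ∑ j, ‖c j‖ := Finset.add_sum_erase _ (fun j => ‖c j‖) (Finset.mem_univ i)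

lemma Matrix.IsDiag.trace_mul {α n : Type*} [NonUnitalNonAssocSemiring α] [Fintype n]
    {F : Matrix n n α} (hF : F.IsDiag) (M : Matrix n n α) : (F * M).trace = ∑ i, F i i * M i i := by
  classical
  rw [← hF.diagonal_diag]
  simp [trace, diagonal_mul]

section Diamond

variable {d o : ℕ}

def diamondDist (Mx Nx : Fin o → Matrix (Fin d) (Fin d) ℂ) : ℝ :=
  ⨆ ρ : {ρ : Matrix (Fin d × Fin d) (Fin d × Fin d) ℂ // IsDensityMatrix ρ},
    ∑ a, traceNorm (ptrace1 (((Mx a - Nx a) ⊗ₖ (1 : Matrix (Fin d) (Fin d) ℂ)) * ρ.1))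

lemma Ddiamond_eq_sum_diamondDist {m : ℕ} (p : Fin m → ℝ)
    (M N : Fin m → Fin o → Matrix (Fin d) (Fin d) ℂ) :
    Ddiamond p M N = 1 / 2 * ∑ x, p x * diamondDist (M x) (N x) :=
  rfl

lemma diamondDist_le {Mx Nx : Fin o → Matrix (Fin d) (Fin d) ℂ} {c : ℝ} (hc : 0 ≤ c)
    (h : ∀ ρ, IsDensityMatrix ρ →
      ∑ a, traceNorm (ptrace1 (((Mx a - Nx a) ⊗ₖ (1 : Matrix (Fin d) (Fin d) ℂ)) * ρ)) ≤ c) :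
    diamondDist Mx Nx ≤ c :=
  Real.iSup_le (fun ρ => h ρ.1 ρ.2) hc

lemma le_diamondDist {Mx Nx : Fin o → Matrix (Fin d) (Fin d) ℂ} (hM : ∀ a, (Mx a).PosSemidef)
    (hMsum : ∑ a, Mx a = 1) (hN : ∀ a, (Nx a).PosSemidef) (hNsum : ∑ a, Nx a = 1)
    {ρ : Matrix (Fin d × Fin d) (Fin d × Fin d) ℂ} (hρ : IsDensityMatrix ρ) :
    ∑ a, traceNorm (ptrace1 (((Mx a - Nx a) ⊗ₖ (1 : Matrix (Fin d) (Fin d) ℂ)) * ρ))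
      ≤ diamondDist Mx Nx := by
  have hsum : ∑ a, (Mx a + Nx a) = ((2 : ℝ) : ℂ) • 1 := by
    rw [Finset.sum_add_distrib, hMsum, hNsum, Complex.ofReal_ofNat, two_smul]
  refine le_ciSup
    (f := fun σ : {ρ : Matrix (Fin d × Fin d) (Fin d × Fin d) ℂ // IsDensityMatrix ρ} =>
      ∑ a, traceNorm (ptrace1 (((Mx a - Nx a) ⊗ₖ (1 : Matrix (Fin d) (Fin d) ℂ)) * σ.1)))
    ?_ ⟨ρ, hρ⟩
  exact ⟨2, Set.forall_mem_range.2 fun σ => sum_traceNorm_ptrace1_sub_le hM hN hsum σ.2⟩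

lemma IsWeighting.sum_mul_const {m : ℕ} {p : Fin m → ℝ} (hp : IsWeighting p) (c : ℝ) :
    ∑ x, p x * c = c := by
  rw [← Finset.sum_mul, hp.2, one_mul]

lemma Ddiamond_le_of_forall {m : ℕ} {p : Fin m → ℝ} (hp : IsWeighting p)
    {M N : Fin m → Fin o → Matrix (Fin d) (Fin d) ℂ} {c : ℝ}
    (h : ∀ x, diamondDist (M x) (N x) ≤ 2 * c) : Ddiamond p M N ≤ c := by
  rw [Ddiamond_eq_sum_diamondDist]
  calc 1 / 2 * ∑ x, p x * diamondDist (M x) (N x) ≤ 1 / 2 * ∑ x, p x * (2 * c) := by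
        gcongr with x
        · exact (hp.1 x).le
        · exact h x
    _ = c := by rw [hp.sum_mul_const]; ring

lemma le_Ddiamond_of_forall {m : ℕ} {p : Fin m → ℝ} (hp : IsWeighting p)
    {M N : Fin m → Fin o → Matrix (Fin d) (Fin d) ℂ} {c : ℝ}
    (h : ∀ x, 2 * c ≤ diamondDist (M x) (N x)) : c ≤ Ddiamond p M N := by
  rw [Ddiamond_eq_sum_diamondDist]
  calc c = 1 / 2 * ∑ x, p x * (2 * c) := by rw [hp.sum_mul_const]; ring
    _ ≤ 1 / 2 * ∑ x, p x * diamondDist (M x) (N x) := by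
        gcongr with x
        · exact (hp.1 x).le
        · exact h x

end Diamond

def uniformAssemblage (m o d : ℕ) : Fin m → Fin o → Matrix (Fin d) (Fin d) ℂ :=
  fun _ _ => (o : ℂ)⁻¹ • 1

lemma isAssemblage_uniformAssemblage {m o d : ℕ} (ho : 0 < o) :
    IsAssemblage (uniformAssemblage m o d) := by
  refine ⟨fun _ _ => PosSemidef.one.smul (by positivity), fun _ => ?_⟩
  simp only [uniformAssemblage, Finset.sum_const, Finset.card_univ, Fintype.card_fin]
  rw [← Nat.cast_smul_eq_nsmul ℂ, smul_smul, mul_inv_cancel₀ (by exact_mod_cast ho.ne'),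
    one_smul]

lemma isIncoherent_uniformAssemblage (m o d : ℕ) : IsIncoherent (uniformAssemblage m o d) :=
  fun _ _ => isDiag_one.smul _

lemma diamondDist_uniformAssemblage_le {m o d : ℕ} (ho : 0 < o) (x : Fin m)
    {Mx : Fin o → Matrix (Fin d) (Fin d) ℂ} (hM : ∀ a, (Mx a).PosSemidef)
    (hMsum : ∑ a, Mx a = 1) : diamondDist Mx (uniformAssemblage m o d x) ≤ 2 * (1 - 1 / o) := by
  set r : ℝ := 1 / o
  have hr0 : 0 ≤ r := by positivity
  have hr1 : r ≤ 1 := div_le_one_of_le₀ (by exact_mod_cast ho) (Nat.cast_nonneg o)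
  have hcompl : ∀ a, (1 - Mx a).PosSemidef := fun a => by
    rw [← hMsum, ← Finset.sum_erase_eq_sub (Finset.mem_univ a)]
    exact posSemidef_sum _ fun b _ => hM b
  have hsplit : ∀ a, Mx a - uniformAssemblage m o d x a
      = ((1 - r : ℝ) : ℂ) • Mx a - (r : ℂ) • (1 - Mx a) := fun a => by
    simp only [uniformAssemblage, r]
    push_cast
    module
  have hsum : ∑ a, (((1 - r : ℝ) : ℂ) • Mx a + (r : ℂ) • (1 - Mx a))
      = ((2 * (1 - r) : ℝ) : ℂ) • 1 := by
    have hor : (o : ℂ) * (r : ℂ) = 1 := by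
      simp only [r]; push_cast; exact mul_one_div_cancel (by exact_mod_cast ho.ne')
    simp only [Finset.sum_add_distrib, ← Finset.smul_sum, Finset.sum_sub_distrib, hMsum,
      Finset.sum_const, Finset.card_univ, Fintype.card_fin]
    push_cast
    linear_combination (norm := module) hor • (1 : Matrix (Fin d) (Fin d) ℂ)
  refine diamondDist_le (by nlinarith) fun ρ hρ => ?_
  simp only [hsplit]
  exact sum_traceNorm_ptrace1_sub_le
    (fun a => (hM a).smul (Complex.zero_le_real.2 (by linarith)))
    (fun a => (hcompl a).smul (Complex.zero_le_real.2 hr0)) hsum hρ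

lemma exists_re_trace_mul_le_of_isDiag {d : ℕ} (hd : 0 < d)
    {M F : Fin d → Matrix (Fin d) (Fin d) ℂ} (hMdiag : ∀ a i, M a i i = (1 / (d : ℝ) : ℂ))
    (hFsum : ∑ a, F a = 1) (hF : ∀ a, (F a).IsDiag) :
    ∃ a, (F a * M a).trace.re ≤ 1 / d := by
  have htotal : ∑ a, (F a * M a).trace = 1 := by
    simp only [fun a => (hF a).trace_mul (M a), hMdiag, ← Finset.sum_mul]
    rw [Finset.sum_comm]
    simp only [← Matrix.sum_apply, hFsum, one_apply_eq, Finset.sum_const, Finset.card_univ,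
      Fintype.card_fin, nsmul_eq_mul, mul_one]
    push_cast
    exact mul_one_div_cancel (by exact_mod_cast hd.ne')
  obtain ⟨a, -, ha⟩ := Finset.exists_le_of_sum_le (Finset.univ_nonempty_iff.2 ⟨⟨0, hd⟩⟩)
    (f := fun a => (F a * M a).trace.re) (g := fun _ => 1 / (d : ℝ)) (by
      rw [← Complex.re_sum, htotal, Finset.sum_const, Finset.card_univ, Fintype.card_fin,
        nsmul_eq_mul, mul_one_div_cancel (by exact_mod_cast hd.ne'), Complex.one_re])
  exact ⟨a, ha⟩

lemma two_mul_one_sub_le_diamondDist {d : ℕ} (hd : 0 < d)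
    {Mx Fx : Fin d → Matrix (Fin d) (Fin d) ℂ} (hM : ∀ a, (Mx a).PosSemidef)
    (hMsum : ∑ a, Mx a = 1) (hMproj : ∀ a, Mx a * Mx a = Mx a ∧ (Mx a).trace = 1)
    (hMdiag : ∀ a i, Mx a i i = (1 / (d : ℝ) : ℂ))
    (hF : ∀ a, (Fx a).PosSemidef) (hFsum : ∑ a, Fx a = 1) (hFdiag : ∀ a, (Fx a).IsDiag) :
    2 * (1 - 1 / d) ≤ diamondDist Mx Fx := by
  obtain ⟨a₀, ha₀⟩ := exists_re_trace_mul_le_of_isDiag hd hMdiag hFsum hFdiag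
  have hstate : IsDensityMatrix (Mx a₀) := ⟨hM a₀, (hMproj a₀).2⟩
  refine le_trans ?_ (le_diamondDist hM hMsum hF hFsum (hstate.kronecker hstate))
  simp only [traceNorm_ptrace1_kronecker_one_mul_kronecker _ _ hstate]
  have hzero : ∑ a, ((Mx a - Fx a) * Mx a₀).trace = 0 := by
    rw [← trace_sum, ← Finset.sum_mul, Finset.sum_sub_distrib, hMsum, hFsum, sub_self, zero_mul,
      trace_zero]
  have hself : ((Mx a₀ - Fx a₀) * Mx a₀).trace.re = 1 - (Fx a₀ * Mx a₀).trace.re := by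
    rw [sub_mul, trace_sub, (hMproj a₀).1, (hMproj a₀).2, Complex.sub_re, Complex.one_re]
  calc 2 * (1 - 1 / d) ≤ 2 * ((Mx a₀ - Fx a₀) * Mx a₀).trace.re := by rw [hself]; linarith
    _ ≤ ∑ a, ‖((Mx a - Fx a) * Mx a₀).trace‖ := two_mul_re_le_sum_norm hzero a₀

/-- The coherence of any rank-1 projective measurement assemblage mutually unbiased to the
computational (incoherent) basis equals `1 - 1/d`, for any weighting. -/
theorem coherence_mutually_unbiased_rank_one_projective {d m : ℕ} (hd : 0 < d)
    (M : Fin m → Fin d → Matrix (Fin d) (Fin d) ℂ)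
    (hM : IsAssemblage M) (hproj : IsRankOneProjective M)
    (hMUBdiag : ∀ x a i, M x a i i = (1 / (d : ℝ) : ℂ))
    (p : Fin m → ℝ) (hp : IsWeighting p) :
    Coherence p M = 1 - 1 / (d : ℝ) := by
  have hlower : ∀ F : {F : Fin m → Fin d → Matrix (Fin d) (Fin d) ℂ //
      IsAssemblage F ∧ IsIncoherent F}, 1 - 1 / (d : ℝ) ≤ Ddiamond p M F.1 :=
    fun ⟨_, hF, hFinc⟩ => le_Ddiamond_of_forall hp fun x =>
      two_mul_one_sub_le_diamondDist hd (hM.1 x) (hM.2 x) (fun a => (hproj x a).2)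
        (hMUBdiag x) (hF.1 x) (hF.2 x) (hFinc x)
  have hupper : Ddiamond p M (uniformAssemblage m d d) ≤ 1 - 1 / (d : ℝ) :=
    Ddiamond_le_of_forall hp fun x => diamondDist_uniformAssemblage_le hd x (hM.1 x) (hM.2 x)
  let F₀ : {F : Fin m → Fin d → Matrix (Fin d) (Fin d) ℂ // IsAssemblage F ∧ IsIncoherent F} :=
    ⟨_, isAssemblage_uniformAssemblage hd, isIncoherent_uniformAssemblage m d d⟩
  have : Nonempty _ := ⟨F₀⟩
  exact le_antisymm ((ciInf_le ⟨_, Set.forall_mem_range.2 hlower⟩ F₀).trans hupper)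
    (le_ciInf hlower)
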